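/- For real z > -1/2 and α > -1/2, ln Γ(z+1) − ln Γ(α+1) − [(z+1/2)ln(z+1/2) − (z+1/2)] + [(α+1/2)ln(α+1/2) − (α+1/2)] = ∫₀^∞ (1/t)(1/t − 1/(2 sinh(t/2)))·(e^{-t(α+1/2)} − e^{-t(z+1/2)}) dt. -/

import Mathlib

open Real Set MeasureTheory Filter Topology



noncomputable def binetG (t : ℝ) : ℝ := (1/t) * (1/t - 1/(2 * Real.sinh (t/2)))

lemma nonneg_of_deriv_nonneg {f f' : ℝ → ℝ} (hd : ∀ v, HasDerivAt f (f' v) v)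
    (h0 : f 0 = 0) (hnn : ∀ v, 0 ≤ v → 0 ≤ f' v) {u : ℝ} (hu : 0 ≤ u) : 0 ≤ f u := by
  have mono : MonotoneOn f (Ici 0) := by
    apply monotoneOn_of_deriv_nonneg (convex_Ici 0)
    · exact fun v _ => (hd v).continuousAt.continuousWithinAt
    · exact fun v _ => ((hd v).differentiableAt).differentiableWithinAt
    · intro v hv
      rw [interior_Ici] at hv
      rw [(hd v).deriv]
      exact hnn v hv.le
  have := mono self_mem_Ici hu hu
  rwa [h0] at this

lemma sinh_le_mul_cosh {u : ℝ} (hu : 0 ≤ u) : Real.sinh u ≤ u * Real.cosh u := by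
  have h : ∀ v : ℝ, HasDerivAt (fun w => w * Real.cosh w - Real.sinh w) (v * Real.sinh v) v := by
    intro v
    have := ((hasDerivAt_id v).mul (Real.hasDerivAt_cosh v)).sub (Real.hasDerivAt_sinh v)
    exact this.congr_deriv (by simp [mul_comm])
  have := nonneg_of_deriv_nonneg h (by simp) (fun v hv => mul_nonneg hv ((by simpa using Real.sinh_le_sinh.mpr hv : (0:ℝ) ≤ Real.sinh v))) hu
  linarith

lemma sinh_key {u : ℝ} (hu : 0 ≤ u) : Real.sinh u - u ≤ u^2/6 * Real.sinh u := by
  set g : ℝ → ℝ := fun w => w - Real.sinh w + w^2/6 * Real.sinh w with hg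
  set g' : ℝ → ℝ := fun w => 1 - Real.cosh w + w/3 * Real.sinh w + w^2/6 * Real.cosh w with hg'
  set g'' : ℝ → ℝ := fun w => 2*w/3 * Real.cosh w - 2/3 * Real.sinh w + w^2/6 * Real.sinh w with hg''
  have hd' : ∀ v : ℝ, HasDerivAt g' (g'' v) v := by
    intro v
    have h1 : HasDerivAt (fun w : ℝ => w/3 * Real.sinh w) (1/3 * Real.sinh v + v/3 * Real.cosh v) v := by
      exact (((hasDerivAt_id v).div_const 3).mul (Real.hasDerivAt_sinh v)).congr_deriv (by simp)
    have h2 : HasDerivAt (fun w : ℝ => w^2/6 * Real.cosh w) (2*v/6 * Real.cosh v + v^2/6 * Real.sinh v) v := by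
      have := (((hasDerivAt_pow 2 v).div_const 6).mul (Real.hasDerivAt_cosh v))
      refine this.congr_deriv ?_
      push_cast
      ring
    have := (((hasDerivAt_const v (1:ℝ)).sub (Real.hasDerivAt_cosh v)).add h1).add h2
    refine this.congr_deriv ?_
    simp only [hg'']; ring
  have hd : ∀ v : ℝ, HasDerivAt g (g' v) v := by
    intro v
    have h2 : HasDerivAt (fun w : ℝ => w^2/6 * Real.sinh w) (2*v/6 * Real.sinh v + v^2/6 * Real.cosh v) v := by
      have := (((hasDerivAt_pow 2 v).div_const 6).mul (Real.hasDerivAt_sinh v))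
      refine this.congr_deriv ?_
      push_cast
      ring
    have := ((hasDerivAt_id v).sub (Real.hasDerivAt_sinh v)).add h2
    refine this.congr_deriv ?_
    simp only [hg']; ring
  have hg''nn : ∀ v, 0 ≤ v → 0 ≤ g'' v := by
    intro v hv
    have h1 := sinh_le_mul_cosh hv
    have h2 : 0 ≤ v^2/6 * Real.sinh v := mul_nonneg (by positivity) ((by simpa using Real.sinh_le_sinh.mpr hv : (0:ℝ) ≤ Real.sinh v))
    simp only [hg'']
    nlinarith
  have hg'nn : ∀ v, 0 ≤ v → 0 ≤ g' v := by
    intro v hv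
    have := nonneg_of_deriv_nonneg hd' (by simp [hg']) hg''nn hv
    exact this
  have := nonneg_of_deriv_nonneg hd (by simp [hg]) hg'nn hu
  simp only [hg] at this
  linarith

lemma two_sinh_half_ge {t : ℝ} (ht : 0 < t) : t ≤ 2 * Real.sinh (t/2) := by
  have := Real.self_le_sinh_iff.mpr (show (0:ℝ) ≤ t/2 by linarith)
  linarith

lemma sinh_half_pos {t : ℝ} (ht : 0 < t) : 0 < 2 * Real.sinh (t/2) := by
  have : 0 < Real.sinh (t/2) := Real.sinh_pos_iff.mpr (by linarith)
  linarith

lemma binetD_nonneg {t : ℝ} (ht : 0 < t) : 0 ≤ 1/t - 1/(2 * Real.sinh (t/2)) := by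
  have h1 := two_sinh_half_ge ht
  have h2 := sinh_half_pos ht
  have := one_div_le_one_div_of_le ht h1
  linarith

lemma binetD_le {t : ℝ} (ht : 0 < t) : 1/t - 1/(2 * Real.sinh (t/2)) ≤ t/24 := by
  have h2 := sinh_half_pos ht
  have hkey := sinh_key (u := t/2) (by linarith)
  -- 1/t - 1/(2 sinh(t/2)) = (2 sinh(t/2) - t)/(t * 2 sinh(t/2))
  have heq : 1/t - 1/(2 * Real.sinh (t/2)) = (2 * Real.sinh (t/2) - t)/(t * (2 * Real.sinh (t/2))) := by
    field_simp
  rw [heq]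
  rw [div_le_iff₀ (by positivity)]
  -- 2 sinh(t/2) - t ≤ (t/24) * (t * 2 sinh(t/2)) = t^2/12 * sinh(t/2)
  nlinarith [hkey]

lemma binetG_nonneg {t : ℝ} (ht : 0 < t) : 0 ≤ binetG t :=
  mul_nonneg (by positivity) (binetD_nonneg ht)

lemma binetG_le {t : ℝ} (ht : 0 < t) : binetG t ≤ 1/24 := by
  have h1 := binetD_le ht
  have : binetG t ≤ (1/t) * (t/24) := mul_le_mul_of_nonneg_left h1 (by positivity)
  calc binetG t ≤ (1/t) * (t/24) := this
    _ = 1/24 := by field_simp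

lemma t_div_sinh_le_one {t : ℝ} (ht : 0 < t) : t / (2 * Real.sinh (t/2)) ≤ 1 :=
  (div_le_one (sinh_half_pos ht)).mpr (two_sinh_half_ge ht)



-- t^n * exp(-(c*t)) integrable on Ioi 0
lemma integrableOn_pow_mul_exp (n : ℕ) {c : ℝ} (hc : 0 < c) :
    IntegrableOn (fun t => t^n * Real.exp (-(c*t))) (Ioi (0:ℝ)) := by
  have := integrableOn_rpow_mul_exp_neg_mul_rpow (p := 1) (s := n) (b := c)
    (lt_of_lt_of_le (by norm_num) (Nat.cast_nonneg n)) one_pos hc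
  apply this.congr_fun ?_ measurableSet_Ioi
  intro x hx
  simp only [Real.rpow_one, Real.rpow_natCast, neg_mul]

lemma tendsto_exp_neg_mul {c : ℝ} (hc : 0 < c) :
    Tendsto (fun t => Real.exp (-(c*t))) atTop (𝓝 0) := by
  apply Real.tendsto_exp_atBot.comp
  exact tendsto_neg_atBot_iff.mpr (Tendsto.const_mul_atTop hc tendsto_id)

lemma tendsto_mul_exp_neg_mul {c : ℝ} (hc : 0 < c) :
    Tendsto (fun t => t * Real.exp (-(c*t))) atTop (𝓝 0) := by
  have h1 : Tendsto (fun y : ℝ => (1/c) * (y * Real.exp (-y))) atTop (𝓝 0) := by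
    simpa using ((tendsto_pow_mul_exp_neg_atTop_nhds_zero 1).const_mul (1/c))
  have h2 : Tendsto (fun t : ℝ => c * t) atTop atTop :=
    Tendsto.const_mul_atTop hc tendsto_id
  have := h1.comp h2
  apply this.congr
  intro t
  simp only [Function.comp_apply, pow_one]
  field_simp

lemma integral_exp_neg_mul_Ioi {c : ℝ} (hc : 0 < c) :
    ∫ t in Ioi (0:ℝ), Real.exp (-(c*t)) = 1/c := by
  have hderiv : ∀ t ∈ Ici (0:ℝ),
      HasDerivAt (fun t => -(1/c) * Real.exp (-(c*t))) (Real.exp (-(c*t))) t := by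
    intro t _
    have h1 : HasDerivAt (fun t : ℝ => -(c*t)) (-c) t := by
      exact ((hasDerivAt_id t).const_mul c).neg.congr_deriv (by simp)
    have := (h1.exp).const_mul (-(1/c))
    refine this.congr_deriv ?_
    field_simp
  have hint : IntegrableOn (fun t => Real.exp (-(c*t))) (Ioi (0:ℝ)) := by
    have := integrableOn_pow_mul_exp 0 hc
    simpa using this
  have htend : Tendsto (fun t => -(1/c) * Real.exp (-(c*t))) atTop (𝓝 0) := by
    simpa using (tendsto_exp_neg_mul hc).const_mul (-(1/c))
  have := MeasureTheory.integral_Ioi_of_hasDerivAt_of_tendsto' hderiv hint htend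
  simp at this
  rw [this]
  field_simp

lemma integral_mul_exp_neg_mul_Ioi {c : ℝ} (hc : 0 < c) :
    ∫ t in Ioi (0:ℝ), t * Real.exp (-(c*t)) = 1/c^2 := by
  have hderiv : ∀ t ∈ Ici (0:ℝ),
      HasDerivAt (fun t => -((t/c + 1/c^2) * Real.exp (-(c*t)))) (t * Real.exp (-(c*t))) t := by
    intro t _
    have h1 : HasDerivAt (fun t : ℝ => -(c*t)) (-c) t := by
      exact ((hasDerivAt_id t).const_mul c).neg.congr_deriv (by simp)
    have h2 : HasDerivAt (fun t : ℝ => t/c + 1/c^2) (1/c) t :=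
      ((hasDerivAt_id t).div_const c).add_const (1/c^2)
    have := (h2.mul h1.exp).neg
    refine this.congr_deriv ?_
    field_simp
    ring
  have hint : IntegrableOn (fun t => t * Real.exp (-(c*t))) (Ioi (0:ℝ)) := by
    have := integrableOn_pow_mul_exp 1 hc
    simpa using this
  have htend : Tendsto (fun t => -((t/c + 1/c^2) * Real.exp (-(c*t)))) atTop (𝓝 0) := by
    have base := ((tendsto_mul_exp_neg_mul hc).const_mul (1/c)).add
        ((tendsto_exp_neg_mul hc).const_mul (1/c^2))
    rw [mul_zero, mul_zero, add_zero] at base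
    have base' := base.neg
    rw [neg_zero] at base'
    apply base'.congr
    intro t; ring
  have := MeasureTheory.integral_Ioi_of_hasDerivAt_of_tendsto' hderiv hint htend
  simp at this
  rw [this]
  field_simp



noncomputable def psiR : ℝ → ℝ := deriv (Real.log ∘ Real.Gamma)

lemma diffAt_logGamma {x : ℝ} (hx : 0 < x) :
    DifferentiableAt ℝ (Real.log ∘ Real.Gamma) x := by
  refine (Real.differentiableAt_Gamma ?_).log (Real.Gamma_ne_zero ?_) <;>
    exact fun m => ne_of_gt (by have := Nat.cast_nonneg (α := ℝ) m; linarith)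

lemma hasDerivAt_logGamma {x : ℝ} (hx : 0 < x) :
    HasDerivAt (Real.log ∘ Real.Gamma) (psiR x) x :=
  (diffAt_logGamma hx).hasDerivAt

lemma logGamma_rec {x : ℝ} (hx : 0 < x) :
    (Real.log ∘ Real.Gamma) (x + 1) = (Real.log ∘ Real.Gamma) x + Real.log x := by
  simp only [Function.comp_apply, Real.Gamma_add_one hx.ne',
    Real.log_mul hx.ne' (Real.Gamma_pos_of_pos hx).ne', add_comm]

lemma psiR_rec {x : ℝ} (hx : 0 < x) : psiR (x + 1) = psiR x + 1/x := by
  unfold psiR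
  rw [← deriv_comp_add_const, one_div, ← Real.deriv_log,
    ← deriv_add (diffAt_logGamma hx) (Real.differentiableAt_log hx.ne')]
  apply EventuallyEq.deriv_eq
  filter_upwards [eventually_gt_nhds hx] with y hy
  exact logGamma_rec hy

lemma psiR_rec_nat {x : ℝ} (hx : 0 < x) (n : ℕ) :
    psiR (x + n) = psiR x + ∑ k ∈ Finset.range n, 1/(x + k) := by
  induction n with
  | zero => simp
  | succ n ih =>
    have hxn : 0 < x + n := by positivity
    have : x + (n+1 : ℕ) = (x + n) + 1 := by push_cast; ring
    rw [this, psiR_rec hxn, ih, Finset.sum_range_succ]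
    ring

lemma psiR_lb {x : ℝ} (hx : 0 < x) : Real.log x ≤ psiR (x + 1) := by
  have h := Real.convexOn_log_Gamma.slope_le_deriv (mem_Ioi.mpr hx)
    (mem_Ioi.mpr (by linarith : (0:ℝ) < x + 1)) (by linarith)
    (diffAt_logGamma (by linarith))
  rw [slope_def_field] at h
  rw [logGamma_rec hx] at h
  simp at h
  exact h

lemma psiR_ub {x : ℝ} (hx : 0 < x) : psiR (x + 1) ≤ Real.log (x + 1) := by
  have h := Real.convexOn_log_Gamma.deriv_le_slope
    (mem_Ioi.mpr (by linarith : (0:ℝ) < x + 1))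
    (mem_Ioi.mpr (by linarith : (0:ℝ) < x + 2)) (by linarith)
    (diffAt_logGamma (by linarith))
  rw [slope_def_field] at h
  have : x + 2 = (x + 1) + 1 := by ring
  rw [this, logGamma_rec (by linarith : (0:ℝ) < x + 1)] at h
  simp at h
  exact h



-- repeated from part3 (will be merged)

lemma tendsto_log_add_sub_log (c : ℝ) :
    Tendsto (fun x : ℝ => Real.log (x + c) - Real.log x) atTop (𝓝 0) := by
  have h0 : Tendsto (fun x : ℝ => 1 + c/x) atTop (𝓝 1) := by
    have := Filter.Tendsto.div_atTop (tendsto_const_nhds (x := c)) tendsto_id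
    simpa using tendsto_const_nhds.add this
  have h1 : Tendsto (fun x : ℝ => Real.log (1 + c/x)) atTop (𝓝 0) := by
    have := (Real.continuousAt_log one_ne_zero).tendsto.comp h0
    simpa [Function.comp_def] using this
  apply h1.congr'
  filter_upwards [eventually_gt_atTop (max 0 (-c))] with x hx
  have hx0 : 0 < x := lt_of_le_of_lt (le_max_left _ _) hx
  have hxc : 0 < x + c := by have := lt_of_le_of_lt (le_max_right _ _) hx; linarith
  rw [show 1 + c/x = (x+c)/x by field_simp, Real.log_div hxc.ne' hx0.ne']

lemma tendsto_psiR_sub_log :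
    Tendsto (fun x : ℝ => psiR (x + 1/2) - Real.log x) atTop (𝓝 0) := by
  have hlow : Tendsto (fun x : ℝ => Real.log (x + (-(1/2))) - Real.log x) atTop (𝓝 0) :=
    tendsto_log_add_sub_log _
  have hup : Tendsto (fun x : ℝ => Real.log (x + 1/2) - Real.log x) atTop (𝓝 0) :=
    tendsto_log_add_sub_log _
  apply tendsto_of_tendsto_of_tendsto_of_le_of_le' hlow hup
  · filter_upwards [eventually_gt_atTop (1/2 : ℝ)] with x hx
    have h1 : (0:ℝ) < x - 1/2 := by linarith
    have := psiR_lb h1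
    have heq : x - 1/2 + 1 = x + 1/2 := by ring
    rw [heq] at this
    have : Real.log (x + (-(1/2))) ≤ psiR (x + 1/2) := by
      rw [show x + (-(1/2)) = x - 1/2 by ring]; exact this
    linarith
  · filter_upwards [eventually_gt_atTop (1/2 : ℝ)] with x hx
    have h1 : (0:ℝ) < x - 1/2 := by linarith
    have := psiR_ub h1
    rw [show x - 1/2 + 1 = x + 1/2 by ring] at this
    linarith

lemma summable_one_div_sq_add {c : ℝ} (hc : 0 < c) :
    Summable (fun k : ℕ => 1/(c + k)^2) := by
  set m := min c 1 with hm
  have hm0 : 0 < m := lt_min hc one_pos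
  have base : Summable (fun n : ℕ => 1/(n:ℝ)^2) :=
    Real.summable_one_div_nat_pow.mpr one_lt_two
  have shifted : Summable (fun k : ℕ => 1/((k:ℝ)+1)^2) := by
    have := base.comp_injective Nat.succ_injective
    apply this.congr
    intro k
    simp only [Function.comp_apply, Nat.succ_eq_add_one]
    push_cast
    ring
  have : Summable (fun k : ℕ => (1/m^2) * (1/((k:ℝ)+1)^2)) := shifted.mul_left _
  apply this.of_nonneg_of_le (fun k => by positivity)
  intro k
  have hk : m * ((k:ℝ)+1) ≤ c + k := by
    have h1 : m ≤ c := min_le_left _ _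
    have h2 : m ≤ 1 := min_le_right _ _
    have hk0 : (0:ℝ) ≤ k := Nat.cast_nonneg k
    nlinarith
  have hpos : (0:ℝ) < c + k := by positivity
  have : (m * ((k:ℝ)+1))^2 ≤ (c + k)^2 := by
    apply sq_le_sq' <;> nlinarith [Nat.cast_nonneg (α := ℝ) k]
  calc 1/(c+(k:ℝ))^2 ≤ 1/(m * ((k:ℝ)+1))^2 := by
        apply one_div_le_one_div_of_le (by positivity) this
    _ = (1/m^2) * (1/((k:ℝ)+1)^2) := by
        rw [mul_pow]
        rw [one_div, mul_inv, one_div, one_div]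
  
lemma summable_psi_terms {x : ℝ} (hx : 0 < x) :
    Summable (fun k : ℕ => 1/(1+(k:ℝ)) - 1/(x+k)) := by
  set m := min x 1 with hm
  have hm0 : 0 < m := lt_min hx one_pos
  have base : Summable (fun k : ℕ => (|x-1|/m) * (1/(1+(k:ℝ))^2)) := by
    apply Summable.mul_left
    have := summable_one_div_sq_add (c := 1) one_pos
    apply this.congr; intro k; rw [add_comm]
  apply Summable.of_norm_bounded base
  intro k
  have hk0 : (0:ℝ) ≤ k := Nat.cast_nonneg k
  have h1 : (0:ℝ) < 1 + k := by linarith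
  have h2 : (0:ℝ) < x + k := by linarith
  have heq : 1/(1+(k:ℝ)) - 1/(x+k) = (x-1)/((1+k)*(x+k)) := by
    field_simp
    ring
  rw [heq, norm_div]
  rw [Real.norm_eq_abs, Real.norm_eq_abs, abs_of_pos (by positivity : (0:ℝ) < (1+k)*(x+k))]
  rw [div_le_iff₀ (by positivity)]
  have hmk : m * (1+(k:ℝ)) ≤ x + k := by
    have := min_le_left x 1; have := min_le_right x 1
    nlinarith
  have key : (1+(k:ℝ))^2 * m ≤ (1+k)*(x+k) := by nlinarith
  calc |x-1| = (|x-1|/m) * m := by field_simp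
    _ ≤ (|x-1|/m) * (1/(1+(k:ℝ))^2) * ((1+k)*(x+k)) := by
        rw [mul_assoc]
        apply mul_le_mul_of_nonneg_left ?_ (by positivity)
        rw [one_div, inv_mul_eq_div, le_div_iff₀ (by positivity : (0:ℝ) < (1+(k:ℝ))^2)]
        nlinarith

lemma psiR_series {x : ℝ} (hx : 0 < x) :
    psiR x = psiR 1 + ∑' k : ℕ, (1/(1+(k:ℝ)) - 1/(x+k)) := by
  set f : ℕ → ℝ := fun k => 1/(1+(k:ℝ)) - 1/(x+k) with hf
  have hsumm := summable_psi_terms hx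
  have hpartial : ∀ n : ℕ, ∑ k ∈ Finset.range n, f k
      = (psiR (1+n) - psiR 1) - (psiR (x+n) - psiR x) := by
    intro n
    have h1 := psiR_rec_nat one_pos n
    have h2 := psiR_rec_nat hx n
    rw [Finset.sum_sub_distrib]
    rw [h1, h2]
    ring
  -- the boundary term tends to 0
  have hbd : Tendsto (fun n : ℕ => psiR (1+(n:ℝ)) - psiR (x+n)) atTop (𝓝 0) := by
    have hlow : Tendsto (fun n : ℕ => (Real.log ((n:ℝ)) - Real.log ((n:ℝ)+x))) atTop (𝓝 0) := by
      have := (tendsto_log_add_sub_log x).comp (tendsto_natCast_atTop_atTop (R := ℝ))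
      simpa using this.neg
    have hup : Tendsto (fun n : ℕ => (Real.log ((n:ℝ)+1) - Real.log ((n:ℝ)+(x-1)))) atTop (𝓝 0) := by
      have h1 := (tendsto_log_add_sub_log 1).comp (tendsto_natCast_atTop_atTop (R := ℝ))
      have h2 := (tendsto_log_add_sub_log (x-1)).comp (tendsto_natCast_atTop_atTop (R := ℝ))
      have := h1.sub h2
      simp only [Function.comp] at *
      simpa using this
    apply tendsto_of_tendsto_of_tendsto_of_le_of_le' hlow hup
    · filter_upwards [eventually_ge_atTop 1] with n hn
      have hn0 : (0:ℝ) < n := by exact_mod_cast hn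
      have ha := psiR_lb hn0
      have hb : psiR (x + n) ≤ Real.log (x + n) := by
        have h0 : (0:ℝ) < x + n - 1 := by
          have : (1:ℝ) ≤ n := by exact_mod_cast hn
          linarith
        have := psiR_ub h0
        rw [show x + (n:ℝ) - 1 + 1 = x + n by ring] at this
        exact this
      have : Real.log ((n:ℝ)) ≤ psiR (1 + n) := by
        rw [show (1:ℝ) + n = (n:ℝ) + 1 by ring]; exact ha
      have hxn : Real.log ((n:ℝ)+x) = Real.log (x + n) := by rw [add_comm]
      rw [hxn]
      linarith
    · filter_upwards [eventually_ge_atTop 1] with n hn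
      have hn0 : (0:ℝ) < n := by exact_mod_cast hn
      have ha := psiR_ub hn0
      have hb : Real.log (x + n - 1) ≤ psiR (x + n) := by
        have h0 : (0:ℝ) < x + n - 1 := by
          have : (1:ℝ) ≤ n := by exact_mod_cast hn
          linarith
        have := psiR_lb h0
        rw [show x + (n:ℝ) - 1 + 1 = x + n by ring] at this
        exact this
      have h1 : psiR (1 + n) ≤ Real.log ((n:ℝ)+1) := by
        rw [show (1:ℝ) + n = (n:ℝ) + 1 by ring]; exact ha
      have h2 : Real.log ((n:ℝ)+(x-1)) = Real.log (x + n - 1) := by ring_nf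
      rw [h2]
      linarith
  have htendsto : Tendsto (fun n : ℕ => ∑ k ∈ Finset.range n, f k) atTop (𝓝 (psiR x - psiR 1)) := by
    have : Tendsto (fun n : ℕ => (psiR (1+(n:ℝ)) - psiR 1) - (psiR (x+n) - psiR x)) atTop
        (𝓝 (psiR x - psiR 1)) := by
      have : Tendsto (fun n : ℕ => (psiR (1+(n:ℝ)) - psiR (x+n)) + (psiR x - psiR 1)) atTop
          (𝓝 (0 + (psiR x - psiR 1))) := hbd.add tendsto_const_nhds
      rw [zero_add] at this
      apply this.congr
      intro n; ring
    apply this.congr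
    intro n
    exact (hpartial n).symm
  have := hsumm.hasSum.tendsto_sum_nat
  have heq := tendsto_nhds_unique this htendsto
  rw [heq]
  ring

lemma psiR_hasDerivAt {x : ℝ} (hx : 0 < x) :
    HasDerivAt psiR (∑' k : ℕ, 1/(x+(k:ℝ))^2) x := by
  set g : ℕ → ℝ → ℝ := fun k y => 1/(1+(k:ℝ)) - 1/(y+k) with hg
  set g' : ℕ → ℝ → ℝ := fun k y => 1/(y+(k:ℝ))^2 with hg'
  have hderiv : ∀ k : ℕ, ∀ y ∈ Ioi (x/2), HasDerivAt (g k) (g' k y) y := by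
    intro k y hy
    rw [mem_Ioi] at hy
    have hyk : y + (k:ℝ) ≠ 0 := by
      have hk : (0:ℝ) ≤ k := Nat.cast_nonneg k
      have : 0 < y := lt_trans (by linarith) hy
      positivity
    have h1 : HasDerivAt (fun y : ℝ => y + (k:ℝ)) 1 y := (hasDerivAt_id y).add_const _
    have h2 : HasDerivAt (fun y : ℝ => (y + (k:ℝ))⁻¹) (-((y+(k:ℝ))^2)⁻¹) y := by
      have := (hasDerivAt_inv hyk).comp y h1
      exact this.congr_deriv (by simp)
    have := h2.const_sub (1/(1+(k:ℝ)))
    have h3 : HasDerivAt (fun y : ℝ => 1/(1+(k:ℝ)) - (y + (k:ℝ))⁻¹) (((y+(k:ℝ))^2)⁻¹) y := by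
      simpa using this
    apply h3.congr_of_eventuallyEq ?_ |>.congr_deriv ?_
    · filter_upwards with z
      simp [hg, one_div]
    · simp [hg', one_div]
  have hbound : ∀ k : ℕ, ∀ y ∈ Ioi (x/2), ‖g' k y‖ ≤ 1/(x/2+(k:ℝ))^2 := by
    intro k y hy
    rw [mem_Ioi] at hy
    have h1 : (0:ℝ) < x/2 + k := by positivity
    have h2 : (0:ℝ) < y + k := by have : (0:ℝ) ≤ k := Nat.cast_nonneg k; linarith
    rw [hg', Real.norm_eq_abs, abs_of_pos (by positivity)]
    apply one_div_le_one_div_of_le (by positivity)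
    nlinarith
  have hu := summable_one_div_sq_add (by linarith : (0:ℝ) < x/2)
  have hg0 : Summable (fun k => g k x) := summable_psi_terms hx
  have hmain : HasDerivAt (fun y => ∑' k : ℕ, g k y) (∑' k : ℕ, g' k x) x := by
    apply hasDerivAt_tsum_of_isPreconnected hu isOpen_Ioi (isPreconnected_Ioi)
      hderiv hbound (mem_Ioi.mpr (by linarith : x/2 < x)) hg0 (mem_Ioi.mpr (by linarith))
  have hshift : HasDerivAt (fun y => psiR 1 + ∑' k : ℕ, g k y) (∑' k : ℕ, g' k x) x :=
    hmain.const_add _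
  have : psiR =ᶠ[𝓝 x] (fun y => psiR 1 + ∑' k : ℕ, g k y) := by
    filter_upwards [eventually_gt_nhds hx] with y hy
    exact psiR_series hy
  exact (hshift.congr_of_eventuallyEq this)




lemma geom_exp_sum {x t : ℝ} (ht : 0 < t) :
    ∑' k : ℕ, t * Real.exp (-((x+1/2+(k:ℝ))*t)) = t * Real.exp (-(x*t)) / (2 * Real.sinh (t/2)) := by
  have hlt : Real.exp (-t) < 1 := Real.exp_lt_one_iff.mpr (by linarith)
  have hterm : ∀ k : ℕ, t * Real.exp (-((x+1/2+(k:ℝ))*t))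
      = (t * Real.exp (-((x+1/2)*t))) * (Real.exp (-t))^k := by
    intro k
    rw [← Real.exp_nat_mul, mul_assoc, ← Real.exp_add]
    congr 2
    ring
  rw [tsum_congr hterm, tsum_mul_left, tsum_geometric_of_lt_one (Real.exp_nonneg _) hlt]
  have hne : 1 - Real.exp (-t) ≠ 0 := by
    have := hlt; linarith [this]
  have hsinh : 2 * Real.sinh (t/2) = Real.exp (t/2) * (1 - Real.exp (-t)) := by
    rw [Real.sinh_eq]
    rw [mul_sub, ← Real.exp_add]
    ring_nf
  rw [hsinh]
  have hx2 : Real.exp (-((x+1/2)*t)) = Real.exp (-(x*t)) / Real.exp (t/2) := by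
    rw [eq_div_iff (Real.exp_ne_zero _), ← Real.exp_add]
    congr 1
    ring
  rw [hx2]
  have he1 : Real.exp (t/2) ≠ 0 := Real.exp_ne_zero _
  field_simp

lemma trigamma_integral {x : ℝ} (hx : 0 < x) :
    ∑' k : ℕ, 1/(x+1/2+(k:ℝ))^2
      = ∫ t in Ioi (0:ℝ), t * Real.exp (-(x*t)) / (2 * Real.sinh (t/2)) := by
  set F : ℕ → ℝ → ℝ := fun k t => t * Real.exp (-((x+1/2+(k:ℝ))*t)) with hF
  have hck : ∀ k : ℕ, (0:ℝ) < x + 1/2 + k := by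
    intro k; have : (0:ℝ) ≤ k := Nat.cast_nonneg k; linarith
  have hF_int : ∀ k : ℕ, Integrable (F k) (volume.restrict (Ioi 0)) := by
    intro k
    have := integrableOn_pow_mul_exp 1 (hck k)
    simpa [hF, IntegrableOn] using this
  have hFval : ∀ k : ℕ, (∫ t in Ioi (0:ℝ), F k t) = 1/(x+1/2+(k:ℝ))^2 := by
    intro k
    simpa [hF] using integral_mul_exp_neg_mul_Ioi (hck k)
  have hF_sum : Summable fun k => ∫ t in Ioi (0:ℝ), ‖F k t‖ := by
    have heq : ∀ k : ℕ, (∫ t in Ioi (0:ℝ), ‖F k t‖) = 1/(x+1/2+(k:ℝ))^2 := by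
      intro k
      rw [← hFval k]
      apply setIntegral_congr_fun measurableSet_Ioi
      intro t ht
      rw [mem_Ioi] at ht
      simp only [Real.norm_eq_abs, hF]
      rw [abs_of_nonneg (by positivity)]
    rw [funext heq]
    exact summable_one_div_sq_add (by linarith : (0:ℝ) < x + 1/2)
  have key := MeasureTheory.integral_tsum_of_summable_integral_norm hF_int hF_sum
  rw [funext hFval] at key
  rw [key]
  apply setIntegral_congr_fun measurableSet_Ioi
  intro t ht
  exact geom_exp_sum (mem_Ioi.mp ht)

lemma continuousOn_binetG : ContinuousOn binetG (Ioi (0:ℝ)) := by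
  unfold binetG
  apply ContinuousOn.mul
  · exact continuousOn_const.div continuousOn_id (fun t ht => (mem_Ioi.mp ht).ne')
  · apply ContinuousOn.sub
    · exact continuousOn_const.div continuousOn_id (fun t ht => (mem_Ioi.mp ht).ne')
    · exact continuousOn_const.div
        ((continuous_const.mul (Real.continuous_sinh.comp (continuous_id.div_const 2))).continuousOn)
        (fun t ht => (sinh_half_pos (mem_Ioi.mp ht)).ne')

lemma aesm_pow_binetG_exp (n : ℕ) (c : ℝ) :
    AEStronglyMeasurable (fun t => t^n * binetG t * Real.exp (-(c*t)))
      (volume.restrict (Ioi (0:ℝ))) := by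
  apply ContinuousOn.aestronglyMeasurable ?_ measurableSet_Ioi
  exact ((continuousOn_pow n).mul continuousOn_binetG).mul
    ((Real.continuous_exp.comp (continuous_const.mul continuous_id).neg).continuousOn)

lemma integrableOn_pow_binetG_exp (n : ℕ) {c : ℝ} (hc : 0 < c) :
    IntegrableOn (fun t => t^n * binetG t * Real.exp (-(c*t))) (Ioi (0:ℝ)) := by
  apply Integrable.mono' ((integrableOn_pow_mul_exp n hc).const_mul (1/24))
    (aesm_pow_binetG_exp n c)
  rw [ae_restrict_iff' measurableSet_Ioi]
  filter_upwards with t ht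
  rw [mem_Ioi] at ht
  have hnn : (0:ℝ) ≤ t^n * binetG t * Real.exp (-(c*t)) :=
    mul_nonneg (mul_nonneg (pow_nonneg ht.le _) (binetG_nonneg ht)) (Real.exp_nonneg _)
  rw [Real.norm_eq_abs, abs_of_nonneg hnn]
  have h2 : t^n * binetG t ≤ t^n * (1/24) :=
    mul_le_mul_of_nonneg_left (binetG_le ht) (by positivity)
  calc t^n * binetG t * Real.exp (-(c*t))
      ≤ t^n * (1/24) * Real.exp (-(c*t)) :=
        mul_le_mul_of_nonneg_right h2 (Real.exp_nonneg _)
    _ = 1/24 * (t^n * Real.exp (-(c*t))) := by ring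

lemma hasDerivAt_binet_integral (n : ℕ) {x : ℝ} (hx : 0 < x) :
    HasDerivAt (fun y => ∫ t in Ioi (0:ℝ), t^n * binetG t * Real.exp (-(y*t)))
      (-∫ t in Ioi (0:ℝ), t^(n+1) * binetG t * Real.exp (-(x*t))) x := by
  have hball : ∀ y ∈ Metric.ball x (x/2), x/2 < y := by
    intro y hy
    rw [Metric.mem_ball, Real.dist_eq, abs_lt] at hy
    linarith [hy.1]
  have key := hasDerivAt_integral_of_dominated_loc_of_deriv_le
    (μ := volume.restrict (Ioi (0:ℝ))) (x₀ := x)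
    (F := fun y t => t^n * binetG t * Real.exp (-(y*t)))
    (F' := fun y t => -(t^(n+1) * binetG t * Real.exp (-(y*t))))
    (bound := fun t => t^(n+1) * (1/24) * Real.exp (-(x/2*t)))
    (Metric.ball_mem_nhds x (half_pos hx))
    (Filter.Eventually.of_forall (fun y => aesm_pow_binetG_exp n y))
    (integrableOn_pow_binetG_exp n hx)
    ((aesm_pow_binetG_exp (n+1) x).neg)
    ?_ ?_ ?_
  · refine key.2.congr_deriv ?_
    rw [integral_neg]
  · -- bound
    rw [ae_restrict_iff' measurableSet_Ioi]
    filter_upwards with t ht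
    intro y hy
    rw [mem_Ioi] at ht
    have hy2 := hball y hy
    rw [norm_neg, Real.norm_eq_abs, abs_of_nonneg
      (mul_nonneg (mul_nonneg (pow_nonneg ht.le _) (binetG_nonneg ht)) (Real.exp_nonneg _))]
    have h1 : Real.exp (-(y*t)) ≤ Real.exp (-(x/2*t)) := by
      apply Real.exp_le_exp.mpr
      nlinarith
    have h2 : t^(n+1) * binetG t ≤ t^(n+1) * (1/24) :=
      mul_le_mul_of_nonneg_left (binetG_le ht) (by positivity)
    calc t^(n+1) * binetG t * Real.exp (-(y*t))
        ≤ t^(n+1) * (1/24) * Real.exp (-(y*t)) :=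
          mul_le_mul_of_nonneg_right h2 (Real.exp_nonneg _)
      _ ≤ t^(n+1) * (1/24) * Real.exp (-(x/2*t)) :=
          mul_le_mul_of_nonneg_left h1 (by positivity)
  · -- bound integrable
    have := (integrableOn_pow_mul_exp (n+1) (by linarith : (0:ℝ) < x/2)).const_mul (1/24)
    apply this.congr
    filter_upwards with t
    ring
  · -- differentiability
    rw [ae_restrict_iff' measurableSet_Ioi]
    filter_upwards with t ht
    intro y hy
    rw [mem_Ioi] at ht
    have h1 : HasDerivAt (fun y : ℝ => -(y*t)) (-t) y := by
      exact ((hasDerivAt_id y).mul_const t).neg.congr_deriv (by simp)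
    have := h1.exp.const_mul (t^n * binetG t)
    refine this.congr_deriv ?_
    ring


noncomputable def binetF (n : ℕ) (x : ℝ) : ℝ :=
  ∫ t in Ioi (0:ℝ), t^n * binetG t * Real.exp (-(x*t))

lemma tendsto_binetF_one : Tendsto (binetF 1) atTop (𝓝 0) := by
  have hup : Tendsto (fun x : ℝ => (1/24) * (1/x^2)) atTop (𝓝 0) := by
    have h1 : Tendsto (fun x : ℝ => x^2) atTop atTop := tendsto_pow_atTop (by norm_num)
    have h2 := ((tendsto_const_nhds (x := (1:ℝ))).div_atTop h1).const_mul (1/24)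
    rw [mul_zero] at h2
    exact h2
  apply tendsto_of_tendsto_of_tendsto_of_le_of_le' tendsto_const_nhds hup
  · filter_upwards [eventually_gt_atTop (0:ℝ)] with x hx
    apply setIntegral_nonneg measurableSet_Ioi
    intro t ht
    rw [mem_Ioi] at ht
    exact mul_nonneg (mul_nonneg (by positivity)
      (binetG_nonneg ht)) (Real.exp_nonneg _)
  · filter_upwards [eventually_gt_atTop (0:ℝ)] with x hx
    have hle : binetF 1 x ≤ ∫ t in Ioi (0:ℝ), (1/24) * (t^1 * Real.exp (-(x*t))) := by
      unfold binetF
      apply setIntegral_mono_on (integrableOn_pow_binetG_exp 1 hx)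
        ((integrableOn_pow_mul_exp 1 hx).const_mul _) measurableSet_Ioi
      intro t ht
      rw [mem_Ioi] at ht
      have h2 : t^1 * binetG t ≤ t^1 * (1/24) :=
        mul_le_mul_of_nonneg_left (binetG_le ht) (by positivity)
      calc t^1 * binetG t * Real.exp (-(x*t))
          ≤ t^1 * (1/24) * Real.exp (-(x*t)) :=
            mul_le_mul_of_nonneg_right h2 (Real.exp_nonneg _)
        _ = 1/24 * (t^1 * Real.exp (-(x*t))) := by ring
    clear hup
    have heval : (∫ t in Ioi (0:ℝ), (1/24) * (t^1 * Real.exp (-(x*t)))) = (1/24) * (1/x^2) := by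
      simp only [pow_one]
      rw [MeasureTheory.integral_const_mul, integral_mul_exp_neg_mul_Ioi hx]
    unfold binetF at hle ⊢
    rw [heval] at hle
    exact hle

lemma binetF_two_eq {x : ℝ} (hx : 0 < x) :
    binetF 2 x = 1/x - ∑' k : ℕ, 1/(x+1/2+(k:ℝ))^2 := by
  have hint1 : IntegrableOn (fun t => Real.exp (-(x*t))) (Ioi (0:ℝ)) := by
    have := integrableOn_pow_mul_exp 0 hx
    simpa using this
  have hint2 : IntegrableOn (fun t => t * Real.exp (-(x*t)) / (2 * Real.sinh (t/2)))
      (Ioi (0:ℝ)) := by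
    apply Integrable.mono' hint1 ?_
    · rw [ae_restrict_iff' measurableSet_Ioi]
      filter_upwards with t ht
      rw [mem_Ioi] at ht
      have hs := sinh_half_pos ht
      have hnn : (0:ℝ) ≤ t * Real.exp (-(x*t)) / (2 * Real.sinh (t/2)) := by positivity
      rw [Real.norm_eq_abs, abs_of_nonneg hnn]
      have heq : t * Real.exp (-(x*t)) / (2 * Real.sinh (t/2))
          = (t / (2 * Real.sinh (t/2))) * Real.exp (-(x*t)) := by ring
      rw [heq]
      calc (t / (2 * Real.sinh (t/2))) * Real.exp (-(x*t))
          ≤ 1 * Real.exp (-(x*t)) :=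
            mul_le_mul_of_nonneg_right (t_div_sinh_le_one ht) (Real.exp_nonneg _)
        _ = Real.exp (-(x*t)) := one_mul _
    · apply ContinuousOn.aestronglyMeasurable ?_ measurableSet_Ioi
      apply ContinuousOn.div
      · exact (continuous_id.mul
          (Real.continuous_exp.comp (continuous_const.mul continuous_id).neg)).continuousOn
      · exact ((continuous_const.mul
          (Real.continuous_sinh.comp (continuous_id.div_const 2)))).continuousOn
      · exact fun t ht => (sinh_half_pos (mem_Ioi.mp ht)).ne'
  have hsub : ∀ t ∈ Ioi (0:ℝ), t^2 * binetG t * Real.exp (-(x*t))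
      = Real.exp (-(x*t)) - t * Real.exp (-(x*t)) / (2 * Real.sinh (t/2)) := by
    intro t ht
    rw [mem_Ioi] at ht
    have hs := sinh_half_pos ht
    unfold binetG
    field_simp
  unfold binetF
  rw [setIntegral_congr_fun measurableSet_Ioi hsub, integral_sub hint1 hint2,
    integral_exp_neg_mul_Ioi hx, ← trigamma_integral hx]

lemma const_of_derivAt_zero {f : ℝ → ℝ} (hf : ∀ x ∈ Ioi (0:ℝ), HasDerivAt f 0 x)
    {a b : ℝ} (ha : 0 < a) (hb : 0 < b) : f a = f b := by
  wlog hab : a ≤ b generalizing a b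
  · exact (this hb ha (by linarith)).symm
  have key := constant_of_has_deriv_right_zero (f := f) (a := a) (b := b)
    (fun x hx => (hf x (by rw [mem_Ioi]; exact lt_of_lt_of_le ha hx.1)).continuousAt.continuousWithinAt)
    (fun x hx => (hf x (by rw [mem_Ioi]; exact lt_of_lt_of_le ha hx.1)).hasDerivWithinAt)
  exact (key b (by constructor <;> linarith)).symm

noncomputable def binetP (x : ℝ) : ℝ := psiR (x + 1/2) - Real.log x - binetF 1 x

lemma binetP_hasDerivAt {x : ℝ} (hx : 0 < x) : HasDerivAt binetP 0 x := by
  have h1 : HasDerivAt (fun y : ℝ => psiR (y + 1/2)) (∑' k : ℕ, 1/(x+1/2+(k:ℝ))^2) x := by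
    have hcomp := (psiR_hasDerivAt (by linarith : (0:ℝ) < x + 1/2)).comp x
      ((hasDerivAt_id x).add_const (1/2))
    exact hcomp.congr_deriv (by simp)
  have h2 : HasDerivAt Real.log x⁻¹ x := Real.hasDerivAt_log hx.ne'
  have h3 : HasDerivAt (binetF 1) (-binetF 2 x) x := by
    have := hasDerivAt_binet_integral 1 hx
    exact this
  have htotal := (h1.sub h2).sub h3
  have hval : ∑' k : ℕ, 1/(x+1/2+(k:ℝ))^2 - x⁻¹ - (-binetF 2 x) = 0 := by
    rw [binetF_two_eq hx]
    rw [one_div, inv_eq_one_div, one_div]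
    ring
  rw [hval] at htotal
  exact htotal.congr_of_eventuallyEq (by
    filter_upwards with y
    rfl)

lemma binetP_eq_zero {x : ℝ} (hx : 0 < x) : binetP x = 0 := by
  have hconst : ∀ y : ℝ, 0 < y → binetP x = binetP y := by
    intro y hy
    exact const_of_derivAt_zero (fun z hz => binetP_hasDerivAt (mem_Ioi.mp hz)) hx hy
  have htend : Tendsto binetP atTop (𝓝 0) := by
    have := tendsto_psiR_sub_log.sub tendsto_binetF_one
    rw [sub_zero] at this
    apply this.congr
    intro y
    rfl
  have htend2 : Tendsto binetP atTop (𝓝 (binetP x)) := by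
    apply tendsto_const_nhds.congr'
    filter_upwards [eventually_gt_atTop (0:ℝ)] with y hy
    exact hconst y hy
  exact tendsto_nhds_unique htend2 htend

noncomputable def binetH (x : ℝ) : ℝ :=
  Real.log (Real.Gamma (x + 1/2)) - (x * Real.log x - x) + binetF 0 x

lemma binetH_hasDerivAt {x : ℝ} (hx : 0 < x) : HasDerivAt binetH 0 x := by
  have h1 : HasDerivAt (fun y : ℝ => Real.log (Real.Gamma (y + 1/2))) (psiR (x + 1/2)) x := by
    have hcomp := (hasDerivAt_logGamma (by linarith : (0:ℝ) < x + 1/2)).comp x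
      ((hasDerivAt_id x).add_const (1/2))
    exact hcomp.congr_deriv (by simp)
  have h2 : HasDerivAt (fun y : ℝ => y * Real.log y - y) (Real.log x) x := by
    have ha := ((hasDerivAt_id x).mul (Real.hasDerivAt_log hx.ne')).sub (hasDerivAt_id x)
    refine ha.congr_deriv ?_
    field_simp
    simp
  have h3 : HasDerivAt (binetF 0) (-binetF 1 x) x := by
    have := hasDerivAt_binet_integral 0 hx
    have heq1 : (fun y => ∫ t in Ioi (0:ℝ), t^0 * binetG t * Real.exp (-(y*t))) = binetF 0 := rfl
    have heq2 : (∫ t in Ioi (0:ℝ), t^(0+1) * binetG t * Real.exp (-(x*t))) = binetF 1 x := rfl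
    rw [heq1, heq2] at this
    exact this
  have htotal := (h1.sub h2).add h3
  have hval : psiR (x + 1/2) - Real.log x + (-binetF 1 x) = binetP x := by
    unfold binetP; ring
  rw [hval, binetP_eq_zero hx] at htotal
  exact htotal.congr_of_eventuallyEq (by filter_upwards with y; rfl)

lemma binetH_const {a b : ℝ} (ha : 0 < a) (hb : 0 < b) : binetH a = binetH b :=
  const_of_derivAt_zero (fun z hz => binetH_hasDerivAt (mem_Ioi.mp hz)) ha hb

theorem binet_intermediate_identity (z α : ℝ) (hz : z > -1/2) (hα : α > -1/2) :
    Real.log (Real.Gamma (z+1)) - Real.log (Real.Gamma (α+1))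
      - ((z+1/2) * Real.log (z+1/2) - (z+1/2))
      + ((α+1/2) * Real.log (α+1/2) - (α+1/2))
    = ∫ t in Ioi (0:ℝ),
        (1/t) * (1/t - 1/(2 * Real.sinh (t/2)))
          * (Real.exp (-t*(α+1/2)) - Real.exp (-t*(z+1/2))) := by
  set x := z + 1/2 with hxdef
  set a := α + 1/2 with hadef
  have hx : 0 < x := by simp [hxdef]; linarith
  have ha : 0 < a := by simp [hadef]; linarith
  have hH := binetH_const hx ha
  have hrhs : (∫ t in Ioi (0:ℝ),
        (1/t) * (1/t - 1/(2 * Real.sinh (t/2)))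
          * (Real.exp (-t*(α+1/2)) - Real.exp (-t*(z+1/2))))
      = binetF 0 a - binetF 0 x := by
    have hsplit : ∀ t ∈ Ioi (0:ℝ),
        (1/t) * (1/t - 1/(2 * Real.sinh (t/2)))
          * (Real.exp (-t*(α+1/2)) - Real.exp (-t*(z+1/2)))
        = t^0 * binetG t * Real.exp (-(a*t)) - t^0 * binetG t * Real.exp (-(x*t)) := by
      intro t ht
      have e1 : Real.exp (-t*(α+1/2)) = Real.exp (-(a*t)) := by
        congr 1; rw [hadef]; ring
      have e2 : Real.exp (-t*(z+1/2)) = Real.exp (-(x*t)) := by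
        congr 1; rw [hxdef]; ring
      rw [e1, e2]
      unfold binetG
      ring
    rw [setIntegral_congr_fun measurableSet_Ioi hsplit]
    rw [integral_sub (integrableOn_pow_binetG_exp 0 ha) (integrableOn_pow_binetG_exp 0 hx)]
    rfl
  rw [hrhs]
  have hgamma1 : z + 1 = x + 1/2 := by rw [hxdef]; ring
  have hgamma2 : α + 1 = a + 1/2 := by rw [hadef]; ring
  rw [hgamma1, hgamma2]
  have hexpand : Real.log (Real.Gamma (x+1/2)) - Real.log (Real.Gamma (a+1/2))
      - (x * Real.log x - x) + (a * Real.log a - a)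
      = (binetH x - binetF 0 x) - (binetH a - binetF 0 a) := by
    unfold binetH
    ring
  calc Real.log (Real.Gamma (x+1/2)) - Real.log (Real.Gamma (a+1/2))
      - (x * Real.log x - x) + (a * Real.log a - a)
      = (binetH x - binetF 0 x) - (binetH a - binetF 0 a) := hexpand
    _ = binetF 0 a - binetF 0 x := by rw [hH]; ring
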